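/- The debiased moment function is doubly robust: under the setup where E[m(W,γ)] = E[α0(X)γ(X)] for all square-integrable γ and θ0 = E[m(W,γ0)], one has E[m(W,γ0) − θ0 + α(X)(Y−γ0(X))] = 0 for every square-integrable α, and E[m(W,γ) − θ0 + α0(X)(Y−γ(X))] = 0 for every square-integrable γ. -/

import Mathlib

/-!
The first identity is the orthogonality of `Y − γ₀(X)` to `L²(X)`. For the second, the Riesz
property turns `E[m(W,γ)]` into `E[α₀(X) γ(X)]`, which cancels against `E[α₀(X)(Y − γ(X))]` once
orthogonality replaces `E[α₀(X) Y]` by `E[α₀(X) γ₀(X)] = θ₀`.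
-/

open MeasureTheory

section

variable {Ω : Type*} [MeasurableSpace Ω] {μ : Measure Ω}

lemma integral_sub_const_add [IsProbabilityMeasure μ] {f g : Ω → ℝ}
    (hf : Integrable f μ) (hg : Integrable g μ) (c : ℝ) :
    ∫ ω, (f ω - c + g ω) ∂μ = ∫ ω, f ω ∂μ - c + ∫ ω, g ω ∂μ := by
  rw [integral_add (f := fun ω => f ω - c) (hf.sub (integrable_const c)) hg,
    integral_sub hf (integrable_const c), integral_const, probReal_univ, one_smul]

lemma integrable_mul_sub_of_memLp_two {f g h : Ω → ℝ}
    (hf : MemLp f 2 μ) (hg : MemLp g 2 μ) (hh : MemLp h 2 μ) :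
    Integrable (fun ω => f ω * (g ω - h ω)) μ :=
  hf.integrable_mul (hg.sub hh)

lemma integral_mul_sub_of_memLp_two {f g h : Ω → ℝ}
    (hf : MemLp f 2 μ) (hg : MemLp g 2 μ) (hh : MemLp h 2 μ) :
    ∫ ω, f ω * (g ω - h ω) ∂μ = ∫ ω, f ω * g ω ∂μ - ∫ ω, f ω * h ω ∂μ := by
  simp_rw [mul_sub]
  exact integral_sub (hf.integrable_mul hg) (hf.integrable_mul hh)

end

theorem doubly_robust_moment_general
    {Ω 𝒳 : Type*} [MeasurableSpace Ω]
    (μ : Measure Ω) [IsProbabilityMeasure μ]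
    (Y : Ω → ℝ) (X : Ω → 𝒳)
    (m : Ω → (𝒳 → ℝ) → ℝ)
    (γ0 α0 : 𝒳 → ℝ)
    (hY : MemLp Y 2 μ)
    (hγ0 : MemLp (fun ω => γ0 (X ω)) 2 μ)
    (hα0 : MemLp (fun ω => α0 (X ω)) 2 μ)
    -- γ0 is the conditional expectation of Y given X:
    (hce : ∀ a : 𝒳 → ℝ, MemLp (fun ω => a (X ω)) 2 μ →
      ∫ ω, a (X ω) * (Y ω - γ0 (X ω)) ∂μ = 0)
    -- Riesz representation: E[m(W,g)] = E[α0(X) g(X)] for all square-integrable g: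
    (hRiesz : ∀ g : 𝒳 → ℝ, MemLp (fun ω => g (X ω)) 2 μ →
      ∫ ω, m ω g ∂μ = ∫ ω, α0 (X ω) * g (X ω) ∂μ)
    (hmγ0 : Integrable (fun ω => m ω γ0) μ)
    (θ0 : ℝ) (hθ0 : θ0 = ∫ ω, m ω γ0 ∂μ) :
    (∀ α : 𝒳 → ℝ, MemLp (fun ω => α (X ω)) 2 μ →
      ∫ ω, (m ω γ0 - θ0 + α (X ω) * (Y ω - γ0 (X ω))) ∂μ = 0) ∧
    (∀ γ : 𝒳 → ℝ, MemLp (fun ω => γ (X ω)) 2 μ →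
      Integrable (fun ω => m ω γ) μ →
      ∫ ω, (m ω γ - θ0 + α0 (X ω) * (Y ω - γ (X ω))) ∂μ = 0) := by
  refine ⟨fun α hα => ?_, fun γ hγ hmγ => ?_⟩
  · rw [integral_sub_const_add hmγ0 (integrable_mul_sub_of_memLp_two hα hY hγ0), hce α hα, hθ0]
    ring
  · have hα0Y : ∫ ω, α0 (X ω) * Y ω ∂μ = ∫ ω, α0 (X ω) * γ0 (X ω) ∂μ := by
      rw [← sub_eq_zero, ← integral_mul_sub_of_memLp_two hα0 hY hγ0]
      exact hce α0 hα0
    rw [integral_sub_const_add hmγ (integrable_mul_sub_of_memLp_two hα0 hY hγ),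
      integral_mul_sub_of_memLp_two hα0 hY hγ, hRiesz γ hγ, hα0Y, hθ0, hRiesz γ0 hγ0]
    ring

/-- Double robustness of the debiased moment function:
`E[m(W,γ₀) − θ₀ + α(X)(Y−γ₀(X))] = 0` for every square-integrable `α`, and
`E[m(W,γ) − θ₀ + α₀(X)(Y−γ(X))] = 0` for every square-integrable `γ`. -/
theorem doubly_robust_moment
    {Ω 𝒳 : Type*} [MeasurableSpace Ω] [MeasurableSpace 𝒳]
    (μ : Measure Ω) [IsProbabilityMeasure μ]
    (Y : Ω → ℝ) (X : Ω → 𝒳)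
    (m : Ω → (𝒳 → ℝ) → ℝ)
    (γ0 α0 : 𝒳 → ℝ)
    (hY : MemLp Y 2 μ)
    (hγ0 : MemLp (fun ω => γ0 (X ω)) 2 μ)
    (hα0 : MemLp (fun ω => α0 (X ω)) 2 μ)
    -- γ0 is the conditional expectation of Y given X:
    (hce : ∀ a : 𝒳 → ℝ, MemLp (fun ω => a (X ω)) 2 μ →
      ∫ ω, a (X ω) * (Y ω - γ0 (X ω)) ∂μ = 0)
    -- Riesz representation: E[m(W,g)] = E[α0(X) g(X)] for all square-integrable g:
    (hRiesz : ∀ g : 𝒳 → ℝ, MemLp (fun ω => g (X ω)) 2 μ →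
      ∫ ω, m ω g ∂μ = ∫ ω, α0 (X ω) * g (X ω) ∂μ)
    (hmγ0 : Integrable (fun ω => m ω γ0) μ)
    (θ0 : ℝ) (hθ0 : θ0 = ∫ ω, m ω γ0 ∂μ) :
    (∀ α : 𝒳 → ℝ, MemLp (fun ω => α (X ω)) 2 μ →
      ∫ ω, (m ω γ0 - θ0 + α (X ω) * (Y ω - γ0 (X ω))) ∂μ = 0) ∧
    (∀ γ : 𝒳 → ℝ, MemLp (fun ω => γ (X ω)) 2 μ →
      Integrable (fun ω => m ω γ) μ →
      ∫ ω, (m ω γ - θ0 + α0 (X ω) * (Y ω - γ (X ω))) ∂μ = 0) :=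
  doubly_robust_moment_general μ Y X m γ0 α0 hY hγ0 hα0 hce hRiesz hmγ0 θ0 hθ0
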